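/- Let L ∈ 𝐋, V ∈ 𝐕(L) and t ∈ {1,…,T}. Then for every u ∈ [0,1] the matrix ((L+uV)ᵀL)_{t,t} is positive semidefinite, and for every u ∈ [0,1) one has rk(((L+uV)ᵀL)_{t,t}) = rk((LᵀL)_{t,t}). -/

import Mathlib

open Matrix Filter Topology

/-- Square matrices of size `dT × dT`, indexed by blocks: index `(t, i)` is
row/column `i` within block `t`. -/
abbrev Mat (d T : ℕ) := Matrix (Fin T × Fin d) (Fin T × Fin d) ℝ

/-- The `t`-th diagonal `d × d` block of a `dT × dT` matrix. -/
def blk {d T : ℕ} (A : Mat d T) (t : Fin T) : Matrix (Fin d) (Fin d) ℝ :=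
  fun i j => A (t, i) (t, j)

/-- The `t`-th block column of a `dT × dT` matrix, a `dT × d` matrix. -/
def colBlk {d T : ℕ} (A : Mat d T) (t : Fin T) : Matrix (Fin T × Fin d) (Fin d) ℝ :=
  fun p j => A p (t, j)

/-- Membership in `𝐋`: block lower triangular matrices. -/
def memL {d T : ℕ} (A : Mat d T) : Prop :=
  ∀ (t s : Fin T) (i j : Fin d), t < s → A (t, i) (s, j) = 0

/-- Membership in `𝐎`: block diagonal matrices with orthogonal `d × d` diagonal blocks
(equivalently: block diagonal and orthogonal). -/
def memO {d T : ℕ} (O : Mat d T) : Prop :=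
  (∀ (t s : Fin T) (i j : Fin d), t ≠ s → O (t, i) (s, j) = 0) ∧ Oᵀ * O = 1

/-- The Frobenius norm of a real matrix. -/
noncomputable def frobNorm {m n : Type*} [Fintype m] [Fintype n] (A : Matrix m n ℝ) : ℝ :=
  Real.sqrt (∑ i, ∑ j, (A i j) ^ 2)

/-- The Frobenius inner product of two real matrices. -/
noncomputable def frobInner {m n : Type*} [Fintype m] [Fintype n] (A B : Matrix m n ℝ) : ℝ :=
  ∑ i, ∑ j, A i j * B i j

/-- The adapted Bures–Wasserstein distance `d_ABW(L, M) = inf_{O ∈ 𝐎} ‖L - M O‖_F`. -/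
noncomputable def dABW {d T : ℕ} (L M : Mat d T) : ℝ :=
  sInf {r : ℝ | ∃ O : Mat d T, memO O ∧ r = frobNorm (L - M * O)}

/-- The set `𝐎*(L, M)` of optimizers of `inf_{O ∈ 𝐎} ‖L - M O‖_F`. -/
noncomputable def OStar {d T : ℕ} (L M : Mat d T) : Set (Mat d T) :=
  {O | memO O ∧ frobNorm (L - M * O) = dABW L M}

/-- The set `𝐕(L) = {M P - L : M ∈ 𝐋, P ∈ 𝐎*(L, M)}`. -/
noncomputable def VSet {d T : ℕ} (L : Mat d T) : Set (Mat d T) :=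
  {V | ∃ M P : Mat d T, memL M ∧ P ∈ OStar L M ∧ V = M * P - L}

/-- The set `𝒱(L) = {V ∈ 𝐋 : (Vᵀ L)_{t,t} is symmetric for all t}`. -/
def calV {d T : ℕ} (L : Mat d T) : Set (Mat d T) :=
  {V | memL V ∧ ∀ t : Fin T, (blk (Vᵀ * L) t).IsSymm}

/-- The set `𝐋^reg = {L ∈ 𝐋 : (Lᵀ L)_{t,t} is positive definite for all t}`. -/
def LReg {d T : ℕ} : Set (Mat d T) :=
  {L | memL L ∧ ∀ t : Fin T, (blk (Lᵀ * L) t).PosDef}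

/-- The sum of the singular values of a real square matrix `A`,
i.e. the trace of the positive semidefinite square root of `Aᵀ A`. -/
noncomputable def svSum {n : ℕ} (A : Matrix (Fin n) (Fin n) ℝ) : ℝ :=
  ((Matrix.posSemidef_conjTranspose_mul_self A).1.eigenvectorUnitary.1 *
    diagonal (Real.sqrt ∘ (Matrix.posSemidef_conjTranspose_mul_self A).1.eigenvalues) *
    (star (Matrix.posSemidef_conjTranspose_mul_self A).1.eigenvectorUnitary :
      Matrix (Fin n) (Fin n) ℝ)).trace

/-- The operator norm of a real matrix: the supremum of the euclidean norm `‖A x‖₂`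
over the euclidean unit ball. -/
noncomputable def opNorm {m n : Type*} [Fintype m] [Fintype n] (A : Matrix m n ℝ) : ℝ :=
  sSup {r : ℝ | ∃ x : n → ℝ, (∑ j, (x j) ^ 2) ≤ 1 ∧ r = Real.sqrt (∑ i, (A.mulVec x i) ^ 2)}

/-!
Let `D` and `C` be the `t`-th block columns of `L` and `M P`. The `t`-th block column of
`L + u V` is `(1 - u) D + u C`, so the matrix in question is `(1 - u) DᵀD + u CᵀD`.
Optimality of `P` survives replacing its `t`-th block `Pₜ` by `Pₜ Q` for any orthogonal `Q`;
expanding the Frobenius norm, this says that `B = CᵀD` maximises `Q ↦ tr (Qᵀ B)` over the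
orthogonal group. Testing this against Householder reflections and products of two of them
shows that `B` is symmetric positive semidefinite. Hence the interpolation is positive
semidefinite, and for `u < 1` its kernel is `ker D`, so its rank is `rk D = rk (DᵀD)`.
-/

lemma eq_zero_of_forall_mul_le_sq_mul {a b : ℝ} (h : ∀ s : ℝ, s * a ≤ s ^ 2 * b) : a = 0 := by
  have hc : 0 < |b| + 1 := by positivity
  have hs := h (a / (|b| + 1))
  field_simp at hs
  nlinarith [le_abs_self b, sq_nonneg a, mul_nonneg (sq_nonneg a) (abs_nonneg b)]

lemma Matrix.rank_eq_rank_of_mulVec_eq_zero_iff {m m' n K : Type*} [Fintype n] [Field K]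
    {A : Matrix m n K} {B : Matrix m' n K} (h : ∀ x, A *ᵥ x = 0 ↔ B *ᵥ x = 0) :
    A.rank = B.rank := by
  have hker : LinearMap.ker A.mulVecLin = LinearMap.ker B.mulVecLin := by
    ext x; exact h x
  have hA := LinearMap.finrank_range_add_finrank_ker A.mulVecLin
  have hB := LinearMap.finrank_range_add_finrank_ker B.mulVecLin
  rw [hker] at hA
  rw [Matrix.rank, Matrix.rank]
  omega

section Householder

variable {n : Type*} [Fintype n] [DecidableEq n]

noncomputable def householder (v : n → ℝ) : Matrix n n ℝ :=
  1 - (2 / (v ⬝ᵥ v)) • vecMulVec v v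

lemma householder_transpose (v : n → ℝ) : (householder v)ᵀ = householder v := by
  simp [householder, transpose_vecMulVec]

lemma householder_mulVec (v w : n → ℝ) :
    householder v *ᵥ w = w - (2 / (v ⬝ᵥ v) * (v ⬝ᵥ w)) • v := by
  rw [householder, sub_mulVec, one_mulVec, smul_mulVec, vecMulVec_mulVec, op_smul_eq_smul,
    smul_smul]

lemma householder_transpose_mul_self {v : n → ℝ} (hv : v ≠ 0) :
    (householder v)ᵀ * householder v = 1 := by
  have hvv : v ⬝ᵥ v ≠ 0 := by simpa using hv
  rw [householder_transpose]
  refine toLin'.injective (LinearMap.ext fun w => ?_)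
  simp only [toLin'_apply, ← mulVec_mulVec, householder_mulVec, one_mulVec, dotProduct_sub,
    dotProduct_smul, smul_eq_mul]
  field_simp
  module

lemma trace_householder_mul (v : n → ℝ) (B : Matrix n n ℝ) :
    (householder v * B).trace = B.trace - 2 / (v ⬝ᵥ v) * (v ⬝ᵥ B *ᵥ v) := by
  rw [householder, sub_mul, one_mul, smul_mul_assoc, trace_sub, trace_smul, vecMulVec_mul,
    trace_vecMulVec, dotProduct_comm v (v ᵥ* B), ← dotProduct_mulVec, smul_eq_mul]

end Householder

section TraceMaximal

variable {n : Type*} [Fintype n] [DecidableEq n]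

def TraceMaximal (B : Matrix n n ℝ) : Prop :=
  ∀ Q : Matrix n n ℝ, Qᵀ * Q = 1 → (Qᵀ * B).trace ≤ B.trace

lemma TraceMaximal.dotProduct_mulVec_nonneg {B : Matrix n n ℝ} (hB : TraceMaximal B)
    (v : n → ℝ) : 0 ≤ v ⬝ᵥ B *ᵥ v := by
  rcases eq_or_ne v 0 with rfl | hv
  · simp
  have hvv : 0 < v ⬝ᵥ v := by simpa using dotProduct_self_star_pos_iff.mpr hv
  have h := hB _ (householder_transpose_mul_self hv)
  rw [householder_transpose, trace_householder_mul] at h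
  have : 0 ≤ 2 / (v ⬝ᵥ v) * (v ⬝ᵥ B *ᵥ v) := by linarith
  exact nonneg_of_mul_nonneg_right this (by positivity)

/- `householder x * householder y` with `x = eᵢ`, `y = eᵢ + s eⱼ` is a rotation in the
`(i, j)`-plane; comparing traces isolates the antisymmetric part `B i j - B j i`. -/
lemma TraceMaximal.mul_sub_le {B : Matrix n n ℝ} (hB : TraceMaximal B) {i j : n} (hij : i ≠ j)
    (s : ℝ) : s * (B i j - B j i) ≤ s ^ 2 * (B i i + B j j) := by
  set x : n → ℝ := Pi.single i 1
  set y : n → ℝ := Pi.single i 1 + s • Pi.single j 1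
  have hx : x ≠ 0 := by simp [x]
  have hy : y ≠ 0 := fun h => by simpa [y, hij] using congrFun h i
  have hQ : (householder x * householder y)ᵀ * (householder x * householder y) = 1 := by
    rw [transpose_mul, Matrix.mul_assoc, ← Matrix.mul_assoc (householder x)ᵀ,
      householder_transpose_mul_self hx, Matrix.one_mul, householder_transpose_mul_self hy]
  have h := hB _ hQ
  rw [transpose_mul, householder_transpose, householder_transpose, Matrix.mul_assoc,
    trace_householder_mul, trace_householder_mul, ← mulVec_mulVec, householder_mulVec] at h
  simp only [x, y, dotProduct_single, single_dotProduct, dotProduct_add, add_dotProduct,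
    dotProduct_smul, smul_dotProduct, dotProduct_sub, mulVec_single, mulVec_add, mulVec_smul,
    Pi.single_eq_same, Pi.single_eq_of_ne hij, Pi.single_eq_of_ne hij.symm, Pi.add_apply,
    Pi.smul_apply, col_apply, MulOpposite.op_one, one_smul, smul_eq_mul, mul_one, one_mul,
    mul_zero, add_zero, zero_add, div_one] at h
  have hb : 0 < 1 + s * s := by nlinarith [mul_self_nonneg s]
  field_simp at h
  nlinarith

lemma TraceMaximal.isSymm {B : Matrix n n ℝ} (hB : TraceMaximal B) : B.IsSymm := by
  refine IsSymm.ext fun i j => ?_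
  rcases eq_or_ne i j with rfl | hij
  · rfl
  have := eq_zero_of_forall_mul_le_sq_mul (hB.mul_sub_le hij.symm)
  linarith

lemma TraceMaximal.posSemidef {B : Matrix n n ℝ} (hB : TraceMaximal B) : B.PosSemidef :=
  .of_dotProduct_mulVec_nonneg (isHermitian_iff_isSymm.mpr hB.isSymm) fun x => by
    simpa using hB.dotProduct_mulVec_nonneg x

end TraceMaximal

lemma transpose_mul_eq_smul_add_smul {m n : Type*} [Fintype m] (C D : Matrix m n ℝ) (u : ℝ) :
    ((1 - u) • D + u • C)ᵀ * D = (1 - u) • (Dᵀ * D) + u • (Cᵀ * D) := by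
  rw [transpose_add, transpose_smul, transpose_smul, Matrix.add_mul, Matrix.smul_mul,
    Matrix.smul_mul]

section Interpolation

variable {m n : Type*} [Fintype m] [Fintype n] {C D : Matrix m n ℝ} {u : ℝ}

lemma posSemidef_interpolate_transpose_mul (hCD : (Cᵀ * D).PosSemidef) (hu : u ∈ Set.Icc 0 1) :
    (((1 - u) • D + u • C)ᵀ * D).PosSemidef := by
  rw [transpose_mul_eq_smul_add_smul C D u]
  have hDD : (Dᵀ * D).PosSemidef := by
    simpa only [conjTranspose_eq_transpose_of_trivial] using posSemidef_conjTranspose_mul_self D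
  exact .add (hDD.smul (sub_nonneg.mpr hu.2)) (hCD.smul hu.1)

lemma rank_interpolate_transpose_mul (hCD : (Cᵀ * D).PosSemidef) (hu : u ∈ Set.Ico 0 1) :
    (((1 - u) • D + u • C)ᵀ * D).rank = D.rank := by
  refine rank_eq_rank_of_mulVec_eq_zero_iff fun x => ⟨fun hx => ?_, fun hx => ?_⟩
  · have hquad : x ⬝ᵥ (((1 - u) • D + u • C)ᵀ * D) *ᵥ x = 0 := by rw [hx, dotProduct_zero]
    rw [transpose_mul_eq_smul_add_smul C D u, add_mulVec, smul_mulVec, smul_mulVec,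
      dotProduct_add, dotProduct_smul, dotProduct_smul, ← mulVec_mulVec, dotProduct_mulVec,
      vecMul_transpose, smul_eq_mul, smul_eq_mul] at hquad
    have hC : 0 ≤ x ⬝ᵥ (Cᵀ * D) *ᵥ x := by simpa using hCD.dotProduct_mulVec_nonneg x
    have hD : 0 ≤ D *ᵥ x ⬝ᵥ D *ᵥ x := by simpa using dotProduct_star_self_nonneg (D *ᵥ x)
    have h1u : 0 < 1 - u := sub_pos.mpr hu.2
    have hDD : D *ᵥ x ⬝ᵥ D *ᵥ x = 0 := by nlinarith [mul_nonneg hu.1 hC]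
    exact dotProduct_self_eq_zero.mp hDD
  · rw [← mulVec_mulVec, hx, mulVec_zero]

end Interpolation

section Blocks

variable {d T : ℕ}

def blkDiag (F : Fin T → Matrix (Fin d) (Fin d) ℝ) : Mat d T :=
  of fun p q => if p.1 = q.1 then F p.1 p.2 q.2 else 0

lemma blk_transpose_mul (X Y : Mat d T) (t : Fin T) :
    blk (Xᵀ * Y) t = (colBlk X t)ᵀ * colBlk Y t :=
  rfl

lemma trace_eq_sum_trace_blk (N : Mat d T) : N.trace = ∑ s, (blk N s).trace := by
  simp [trace, blk, Fintype.sum_prod_type]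

lemma trace_blkDiag_transpose_mul (F : Fin T → Matrix (Fin d) (Fin d) ℝ) (N : Mat d T) :
    ((blkDiag F)ᵀ * N).trace = ∑ s, ((F s)ᵀ * blk N s).trace := by
  simp [trace, mul_apply, blkDiag, blk, Fintype.sum_prod_type, ite_mul]

lemma memO_blkDiag {F : Fin T → Matrix (Fin d) (Fin d) ℝ} (hF : ∀ s, (F s)ᵀ * F s = 1) :
    memO (blkDiag F) := by
  refine ⟨fun s s' i j h => by simp [blkDiag, h], ?_⟩
  ext ⟨s, i⟩ ⟨s', j⟩
  by_cases h : s = s'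
  · subst h
    simpa [mul_apply, blkDiag, Fintype.sum_prod_type, ite_mul, one_apply] using
      congrFun (congrFun (hF s) i) j
  · simp [mul_apply, blkDiag, Fintype.sum_prod_type, ite_mul, one_apply, h, Ne.symm h]

lemma memO.mul {A B : Mat d T} (hA : memO A) (hB : memO B) : memO (A * B) := by
  refine ⟨fun s s' i j h => ?_, ?_⟩
  · rw [mul_apply]
    refine Finset.sum_eq_zero fun r _ => ?_
    by_cases hr : s = r.1
    · rw [hB.1 r.1 s' r.2 j (hr ▸ h), mul_zero]
    · rw [hA.1 s r.1 i r.2 hr, zero_mul]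
  · rw [transpose_mul, Matrix.mul_assoc, ← Matrix.mul_assoc Aᵀ, hA.2, Matrix.one_mul, hB.2]

lemma traceMaximal_blk {N : Mat d T} (hN : ∀ E, memO E → (Eᵀ * N).trace ≤ N.trace)
    (t : Fin T) : TraceMaximal (blk N t) := by
  intro Q hQ
  let F : Fin T → Matrix (Fin d) (Fin d) ℝ := Function.update 1 t Q
  have hF : ∀ s, (F s)ᵀ * F s = 1 := fun s => by
    by_cases hs : s = t
    · subst hs; simpa [F] using hQ
    · simp [F, hs]
  have hle := hN _ (memO_blkDiag hF)
  have hdiff : ∑ s, (((F s)ᵀ * blk N s).trace - (blk N s).trace)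
      = (Qᵀ * blk N t).trace - (blk N t).trace := by
    rw [Finset.sum_eq_single t (fun s _ hs => by simp [F, hs]) (by simp)]
    simp [F]
  rw [trace_blkDiag_transpose_mul, trace_eq_sum_trace_blk N] at hle
  rw [Finset.sum_sub_distrib] at hdiff
  linarith

end Blocks

section Optimality

lemma frobNorm_sq {m n : Type*} [Fintype m] [Fintype n] (A : Matrix m n ℝ) :
    frobNorm A ^ 2 = (Aᵀ * A).trace := by
  rw [frobNorm, Real.sq_sqrt (by positivity)]
  simp only [trace, diag, mul_apply, transpose_apply, sq]
  exact Finset.sum_comm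

lemma frobNorm_sub_mul_sq {m n : Type*} [Fintype m] [Fintype n] [DecidableEq n]
    (L M : Matrix m n ℝ) {O : Matrix n n ℝ} (hO : Oᵀ * O = 1) :
    frobNorm (L - M * O) ^ 2 = frobNorm L ^ 2 + frobNorm M ^ 2 - 2 * ((M * O)ᵀ * L).trace := by
  have hO' : O * Oᵀ = 1 := mul_eq_one_comm.mp hO
  have hcross : (Lᵀ * (M * O)).trace = ((M * O)ᵀ * L).trace := by
    rw [← trace_transpose, transpose_mul, transpose_transpose]
  have hnorm : ((M * O)ᵀ * (M * O)).trace = (Mᵀ * M).trace := by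
    rw [transpose_mul, Matrix.mul_assoc, trace_mul_comm, Matrix.mul_assoc, Matrix.mul_assoc,
      hO', Matrix.mul_one]
  rw [frobNorm_sq, frobNorm_sq, frobNorm_sq, transpose_sub, Matrix.sub_mul, Matrix.mul_sub,
    Matrix.mul_sub, trace_sub, trace_sub, trace_sub, hcross, hnorm]
  ring

variable {d T : ℕ}

lemma dABW_le {L M O : Mat d T} (hO : memO O) : dABW L M ≤ frobNorm (L - M * O) :=
  csInf_le ⟨0, fun _ ⟨_, _, hr⟩ => hr ▸ Real.sqrt_nonneg _⟩ ⟨O, hO, rfl⟩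

lemma trace_le_of_mem_OStar {L M P O : Mat d T} (hP : P ∈ OStar L M) (hO : memO O) :
    ((M * O)ᵀ * L).trace ≤ ((M * P)ᵀ * L).trace := by
  have hle : frobNorm (L - M * P) ^ 2 ≤ frobNorm (L - M * O) ^ 2 := by
    gcongr
    · exact Real.sqrt_nonneg _
    · exact hP.2 ▸ dABW_le hO
  rw [frobNorm_sub_mul_sq L M hP.1.2, frobNorm_sub_mul_sq L M hO.2] at hle
  linarith

lemma traceMaximal_blk_of_mem_OStar {L M P : Mat d T} (hP : P ∈ OStar L M) (t : Fin T) :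
    TraceMaximal (blk ((M * P)ᵀ * L) t) :=
  traceMaximal_blk (fun E hE => by
    simpa only [Matrix.mul_assoc, transpose_mul] using trace_le_of_mem_OStar hP (hP.1.mul hE)) t

end Optimality

theorem stmt6_general (d T : ℕ) (L V : Mat d T)
    (hV : V ∈ VSet L) (t : Fin T) :
    (∀ u : ℝ, u ∈ Set.Icc (0 : ℝ) 1 → (blk ((L + u • V)ᵀ * L) t).PosSemidef) ∧
    (∀ u : ℝ, u ∈ Set.Ico (0 : ℝ) 1 →
      (blk ((L + u • V)ᵀ * L) t).rank = (blk (Lᵀ * L) t).rank) := by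
  obtain ⟨M, P, -, hP, rfl⟩ := hV
  have hblk : ∀ u : ℝ, blk ((L + u • (M * P - L))ᵀ * L) t
      = ((1 - u) • colBlk L t + u • colBlk (M * P) t)ᵀ * colBlk L t := fun u => by
    rw [blk_transpose_mul, show L + u • (M * P - L) = (1 - u) • L + u • (M * P) by module]
    rfl
  have hB : ((colBlk (M * P) t)ᵀ * colBlk L t).PosSemidef :=
    (traceMaximal_blk_of_mem_OStar hP t).posSemidef
  refine ⟨fun u hu => ?_, fun u hu => ?_⟩
  · rw [hblk]
    exact posSemidef_interpolate_transpose_mul hB hu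
  · rw [hblk, rank_interpolate_transpose_mul hB hu, blk_transpose_mul, rank_transpose_mul_self]

/-- for `V ∈ 𝐕(L)` and each `t`, the matrix `((L+uV)ᵀ L)_{t,t}` is positive
semidefinite for `u ∈ [0,1]`, and has the same rank as `(Lᵀ L)_{t,t}` for `u ∈ [0,1)`. -/
theorem stmt6 (d T : ℕ) (hd : 0 < d) (hT : 0 < T) (L V : Mat d T)
    (hL : memL L) (hV : V ∈ VSet L) (t : Fin T) :
    (∀ u : ℝ, u ∈ Set.Icc (0 : ℝ) 1 → (blk ((L + u • V)ᵀ * L) t).PosSemidef) ∧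
    (∀ u : ℝ, u ∈ Set.Ico (0 : ℝ) 1 →
      (blk ((L + u • V)ᵀ * L) t).rank = (blk (Lᵀ * L) t).rank) :=
  stmt6_general d T L V hV t
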